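/- Let I₁ denote the modified Bessel function of the first kind of order one, defined by the power series I₁(u) = ∑_{m=0}^∞ (1/(m!(m+1)!)) (u/2)^{2m+1}. For every γ > 0 there exists a constant C = C(γ) > 0 such that for all reals t > 0 and r with 1 < r < γt/2, one has ∫_0^∞ e^{γ x} (r/t) exp(−(r² + x²)/(2t)) I₁(r x / t) dx ≤ C √r · e^{C r} · (1/√t) · e^{γ² t / 2}. -/

import Mathlib

/-- The modified Bessel function of the first kind of order one, defined by its
everywhere-convergent power series. -/
noncomputable def besselI1 (u : ℝ) : ℝ :=
  ∑' m : ℕ, (1 / ((Nat.factorial m : ℝ) * (Nat.factorial (m + 1) : ℝ))) * (u / 2) ^ (2 * m + 1)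

lemma besselI1_term_le {u : ℝ} (hu : 0 ≤ u) (m : ℕ) :
    (1 / ((Nat.factorial m : ℝ) * (Nat.factorial (m + 1) : ℝ))) * (u / 2) ^ (2 * m + 1) ≤
      u ^ (2 * m + 1) / ((2 * m + 1).factorial : ℝ) := by
  have hnat : ((2 * m + 1).factorial : ℕ) ≤ 2 ^ (2 * m + 1) * (m.factorial * (m + 1).factorial) := by
    have h1 : (2 * m + 1).choose m * m.factorial * ((2 * m + 1) - m).factorial
        = (2 * m + 1).factorial := Nat.choose_mul_factorial_mul_factorial (by omega)
    have h2 : (2 * m + 1) - m = m + 1 := by omega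
    have h3 : (2 * m + 1).choose m ≤ 4 ^ m := Nat.choose_middle_le_pow m
    have h4 : (4 : ℕ) ^ m ≤ 2 ^ (2 * m + 1) := by
      calc (4 : ℕ) ^ m = 2 ^ (2 * m) := by rw [pow_mul]; norm_num
        _ ≤ 2 ^ (2 * m + 1) := Nat.pow_le_pow_right (by norm_num) (by omega)
    calc (2 * m + 1).factorial = (2 * m + 1).choose m * m.factorial * (m + 1).factorial := by
          rw [← h1, h2]
      _ ≤ 4 ^ m * m.factorial * (m + 1).factorial := by
          exact Nat.mul_le_mul_right _ (Nat.mul_le_mul_right _ h3)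
      _ ≤ 2 ^ (2 * m + 1) * (m.factorial * (m + 1).factorial) := by
          rw [← mul_assoc]
          exact Nat.mul_le_mul_right _ (Nat.mul_le_mul_right _ h4)
  have hreal : ((2 * m + 1).factorial : ℝ) ≤
      2 ^ (2 * m + 1) * ((m.factorial : ℝ) * ((m + 1).factorial : ℝ)) := by
    exact_mod_cast hnat
  have hpos : (0 : ℝ) < ((2 * m + 1).factorial : ℝ) := by positivity
  have hupow : (u / 2) ^ (2 * m + 1) = u ^ (2 * m + 1) / 2 ^ (2 * m + 1) := div_pow u 2 _
  rw [hupow]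
  rw [div_mul_eq_mul_div, one_mul, div_div]
  have hun : (0 : ℝ) ≤ u ^ (2 * m + 1) := by positivity
  exact div_le_div_of_nonneg_left hun hpos (by linarith [hreal])

lemma besselI1_summable {u : ℝ} (hu : 0 ≤ u) :
    Summable (fun m : ℕ =>
      (1 / ((Nat.factorial m : ℝ) * (Nat.factorial (m + 1) : ℝ))) * (u / 2) ^ (2 * m + 1)) := by
  refine Summable.of_nonneg_of_le (fun m => by positivity) (besselI1_term_le hu)
    (Real.hasSum_sinh u).summable

lemma besselI1_nonneg {u : ℝ} (hu : 0 ≤ u) : 0 ≤ besselI1 u :=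
  tsum_nonneg fun m => by positivity

lemma besselI1_le_half_exp {u : ℝ} (hu : 0 ≤ u) : besselI1 u ≤ Real.exp u / 2 := by
  have h1 : besselI1 u ≤ Real.sinh u := by
    rw [← (Real.hasSum_sinh u).tsum_eq]
    exact Summable.tsum_le_tsum (besselI1_term_le hu) (besselI1_summable hu)
      (Real.hasSum_sinh u).summable
  have h2 : Real.sinh u ≤ Real.exp u / 2 := by
    rw [Real.sinh_eq]
    have := Real.exp_pos (-u)
    linarith
  linarith

set_option maxHeartbeats 1000000

/-- Exponential-moment bound for the zero-dimensional Bessel process: for every `γ > 0` there is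
`C > 0` such that for all `t > 0` and `1 < r < γt/2`,
`∫_0^∞ e^{γx} (r/t) e^{−(r²+x²)/(2t)} I₁(rx/t) dx ≤ C √r e^{Cr} (1/√t) e^{γ²t/2}`. -/
theorem stmt_12 (γ : ℝ) (hγ : 0 < γ) : ∃ C : ℝ, 0 < C ∧
    ∀ t r : ℝ, 0 < t → 1 < r → r < γ * t / 2 →
      (∫ x in Set.Ioi (0 : ℝ),
          Real.exp (γ * x) *
            ((r / t) * Real.exp (-(r ^ 2 + x ^ 2) / (2 * t)) * besselI1 (r * x / t))) ≤
        C * Real.sqrt r * Real.exp (C * r) * (1 / Real.sqrt t) * Real.exp (γ ^ 2 * t / 2) := by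
  refine ⟨γ + 3, by linarith, fun t r ht hr _hrt => ?_⟩
  have hr0 : (0 : ℝ) < r := by linarith
  set b : ℝ := 1 / (2 * t) with hb_def
  have hb : 0 < b := by positivity
  set c : ℝ := r + γ * t with hc_def
  set K : ℝ := γ * r + γ ^ 2 * t / 2 with hK_def
  set A : ℝ := r / (2 * t) * Real.exp K with hA_def
  have hA : 0 < A := by positivity
  set g : ℝ → ℝ := fun x => A * Real.exp (-b * (x - c) ^ 2) with hg_def
  have hgint : MeasureTheory.Integrable g := by
    exact ((integrable_exp_neg_mul_sq hb).comp_sub_right c).const_mul A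
  -- pointwise bound on Ioi 0
  have hle : ∀ x ∈ Set.Ioi (0 : ℝ),
      Real.exp (γ * x) *
        ((r / t) * Real.exp (-(r ^ 2 + x ^ 2) / (2 * t)) * besselI1 (r * x / t)) ≤ g x := by
    intro x hx
    have hx0 : 0 < x := hx
    have hux : 0 ≤ r * x / t := by positivity
    have h1 : besselI1 (r * x / t) ≤ Real.exp (r * x / t) / 2 := besselI1_le_half_exp hux
    have step1 : Real.exp (γ * x) *
        ((r / t) * Real.exp (-(r ^ 2 + x ^ 2) / (2 * t)) * besselI1 (r * x / t)) ≤
        Real.exp (γ * x) *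
        ((r / t) * Real.exp (-(r ^ 2 + x ^ 2) / (2 * t)) * (Real.exp (r * x / t) / 2)) := by
      gcongr
    refine step1.trans_eq ?_
    have hrw : Real.exp (γ * x) *
        ((r / t) * Real.exp (-(r ^ 2 + x ^ 2) / (2 * t)) * (Real.exp (r * x / t) / 2)) =
        r / (2 * t) * Real.exp (γ * x + -(r ^ 2 + x ^ 2) / (2 * t) + r * x / t) := by
      rw [Real.exp_add, Real.exp_add]; ring
    rw [hrw]
    simp only [hg_def, hA_def]
    rw [mul_assoc, ← Real.exp_add]
    congr 1
    simp only [hK_def, hb_def, hc_def]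
    field_simp
    ring
  have hnonneg : ∀ x ∈ Set.Ioi (0 : ℝ), 0 ≤
      Real.exp (γ * x) *
        ((r / t) * Real.exp (-(r ^ 2 + x ^ 2) / (2 * t)) * besselI1 (r * x / t)) := by
    intro x hx
    have hx0 : 0 < x := hx
    have hux : 0 ≤ r * x / t := by positivity
    have hb1 := besselI1_nonneg hux
    have h1 : (0:ℝ) ≤ r / t * Real.exp (-(r ^ 2 + x ^ 2) / (2 * t)) := by positivity
    exact mul_nonneg (Real.exp_pos _).le (mul_nonneg h1 hb1)
  have hmeas : MeasurableSet (Set.Ioi (0 : ℝ)) := measurableSet_Ioi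
  have step2 : (∫ x in Set.Ioi (0 : ℝ),
      Real.exp (γ * x) *
        ((r / t) * Real.exp (-(r ^ 2 + x ^ 2) / (2 * t)) * besselI1 (r * x / t))) ≤
      ∫ x in Set.Ioi (0 : ℝ), g x := by
    refine MeasureTheory.integral_mono_of_nonneg ?_ hgint.integrableOn ?_
    · exact (MeasureTheory.ae_restrict_iff' hmeas).2 (Filter.Eventually.of_forall hnonneg)
    · exact (MeasureTheory.ae_restrict_iff' hmeas).2 (Filter.Eventually.of_forall hle)
  have step3 : (∫ x in Set.Ioi (0 : ℝ), g x) ≤ ∫ x : ℝ, g x := by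
    refine MeasureTheory.setIntegral_le_integral hgint ?_
    exact Filter.Eventually.of_forall fun x => by positivity
  have step4 : (∫ x : ℝ, g x) = A * Real.sqrt (Real.pi / b) := by
    simp only [hg_def]
    rw [MeasureTheory.integral_const_mul]
    congr 1
    rw [show (fun x : ℝ => Real.exp (-b * (x - c) ^ 2)) =
        (fun x : ℝ => (fun y : ℝ => Real.exp (-b * y ^ 2)) (x - c)) from rfl]
    rw [MeasureTheory.integral_sub_right_eq_self (fun y : ℝ => Real.exp (-b * y ^ 2)) c]
    exact integral_gaussian b
  -- now the scalar bound
  have hsqrt_pi : Real.sqrt (Real.pi / b) = Real.sqrt (2 * Real.pi) * Real.sqrt t := by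
    rw [← Real.sqrt_mul (by positivity)]
    congr 1
    rw [hb_def]
    field_simp
  have hst : 0 < Real.sqrt t := Real.sqrt_pos.2 ht
  have hsr : 0 < Real.sqrt r := Real.sqrt_pos.2 hr0
  have hsq2pi : Real.sqrt (2 * Real.pi) ≤ 3 := by
    rw [show (3 : ℝ) = Real.sqrt 9 by
      rw [show (9 : ℝ) = 3 ^ 2 by norm_num, Real.sqrt_sq (by norm_num)]]
    exact Real.sqrt_le_sqrt (by nlinarith [Real.pi_le_four])
  have hsr_le : Real.sqrt r ≤ Real.exp (3 * r) := by
    have h1 : Real.sqrt r ≤ r := by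
      nlinarith [Real.sq_sqrt hr0.le, Real.sqrt_nonneg r]
    have h2 : r ≤ Real.exp r := by linarith [Real.add_one_le_exp r]
    have h3 : Real.exp r ≤ Real.exp (3 * r) := Real.exp_le_exp.2 (by linarith)
    linarith
  have hfinal : A * Real.sqrt (Real.pi / b) ≤
      (γ + 3) * Real.sqrt r * Real.exp ((γ + 3) * r) * (1 / Real.sqrt t) *
        Real.exp (γ ^ 2 * t / 2) := by
    rw [hsqrt_pi, hA_def, hK_def]
    have hsqt : Real.sqrt t * Real.sqrt t = t := Real.mul_self_sqrt ht.le
    have hexpK : Real.exp (γ * r + γ ^ 2 * t / 2) =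
        Real.exp (γ * r) * Real.exp (γ ^ 2 * t / 2) := Real.exp_add _ _
    have hexpC : Real.exp ((γ + 3) * r) = Real.exp (γ * r) * Real.exp (3 * r) := by
      rw [← Real.exp_add]; ring_nf
    rw [hexpK, hexpC]
    have key : r / (2 * t) * Real.sqrt (2 * Real.pi) * Real.sqrt t ≤
        (γ + 3) * Real.sqrt r * Real.exp (3 * r) * (1 / Real.sqrt t) := by
      have hsrr : Real.sqrt r * Real.sqrt r = r := Real.mul_self_sqrt hr0.le
      have hE3 : 0 < Real.exp (3 * r) := Real.exp_pos _
      have h2 : r ≤ Real.sqrt r * Real.exp (3 * r) := by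
        nlinarith [mul_le_mul_of_nonneg_left hsr_le hsr.le]
      have hA1 : r * Real.sqrt (2 * Real.pi) ≤
          2 * (γ + 3) * (Real.sqrt r * Real.exp (3 * r)) := by
        nlinarith [Real.sqrt_nonneg (2 * Real.pi), hr0, mul_pos hsr hE3]
      rw [mul_one_div, div_mul_eq_mul_div, div_mul_eq_mul_div,
        div_le_div_iff₀ (by positivity) hst]
      have hrw2 : r * Real.sqrt (2 * Real.pi) * Real.sqrt t * Real.sqrt t
          = r * Real.sqrt (2 * Real.pi) * t := by
        rw [mul_assoc (r * Real.sqrt (2 * Real.pi)), hsqt]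
      rw [hrw2]
      nlinarith [mul_le_mul_of_nonneg_right hA1 ht.le]
    calc r / (2 * t) * (Real.exp (γ * r) * Real.exp (γ ^ 2 * t / 2)) *
          (Real.sqrt (2 * Real.pi) * Real.sqrt t)
        = (r / (2 * t) * Real.sqrt (2 * Real.pi) * Real.sqrt t) *
            (Real.exp (γ * r) * Real.exp (γ ^ 2 * t / 2)) := by ring
      _ ≤ ((γ + 3) * Real.sqrt r * Real.exp (3 * r) * (1 / Real.sqrt t)) *
            (Real.exp (γ * r) * Real.exp (γ ^ 2 * t / 2)) := by
          exact mul_le_mul_of_nonneg_right key (by positivity)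
      _ = (γ + 3) * Real.sqrt r * (Real.exp (γ * r) * Real.exp (3 * r)) *
            (1 / Real.sqrt t) * Real.exp (γ ^ 2 * t / 2) := by ring
  calc (∫ x in Set.Ioi (0 : ℝ),
      Real.exp (γ * x) *
        ((r / t) * Real.exp (-(r ^ 2 + x ^ 2) / (2 * t)) * besselI1 (r * x / t)))
      ≤ ∫ x in Set.Ioi (0 : ℝ), g x := step2
    _ ≤ ∫ x : ℝ, g x := step3
    _ = A * Real.sqrt (Real.pi / b) := step4
    _ ≤ (γ + 3) * Real.sqrt r * Real.exp ((γ + 3) * r) * (1 / Real.sqrt t) *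
        Real.exp (γ ^ 2 * t / 2) := hfinal
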